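/- Let F be a field of characteristic ≠ 2 and let a, b ∈ M₂(F) be traceless matrices. Then a and b are linearly dependent over F if and only if a×b = 0. -/
import Mathlib


open Matrix

/-- The cross product of traceless 2×2 matrices: `a×b = (ab - ba)/2`. -/
noncomputable def matCross {F : Type*} [Field F] (a b : Matrix (Fin 2) (Fin 2) F) :
    Matrix (Fin 2) (Fin 2) F :=
  (2 : F)⁻¹ • (a * b - b * a)

/-- traceless `a, b` are linearly dependent iff `a × b = 0`. -/
theorem stmt3 {F : Type*} [Field F] (h2 : (2 : F) ≠ 0)
    (a b : Matrix (Fin 2) (Fin 2) F) (ha : a.trace = 0) (hb : b.trace = 0) :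
    ¬ LinearIndependent F ![a, b] ↔ matCross a b = 0 := by
  rw [Matrix.trace_fin_two] at ha hb
  constructor
  · intro hnl
    rw [LinearIndependent.pair_iff] at hnl
    push_neg at hnl
    obtain ⟨s, t, heq, hne⟩ := hnl
    by_cases hs : s = 0
    · have ht := hne hs
      rw [hs, zero_smul, zero_add] at heq
      have hb0 : b = 0 := (smul_eq_zero.mp heq).resolve_left ht
      simp [matCross, hb0]
    · have hsa : s • a = -(t • b) := eq_neg_of_add_eq_zero_left heq
      have key : s • (a * b - b * a) = 0 := by
        calc s • (a * b - b * a) = (s • a) * b - b * (s • a) := by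
              rw [smul_sub, smul_mul_assoc, mul_smul_comm]
          _ = (-(t • b)) * b - b * (-(t • b)) := by rw [hsa]
          _ = 0 := by simp [smul_mul_assoc, mul_smul_comm]
      have hc : a * b - b * a = 0 := (smul_eq_zero.mp key).resolve_left hs
      rw [matCross, hc, smul_zero]
  · intro hm
    have hc : a * b - b * a = 0 := by
      rw [matCross] at hm
      exact (smul_eq_zero.mp hm).resolve_left (inv_ne_zero h2)
    have e00 := congrFun (congrFun hc 0) 0
    have e01 := congrFun (congrFun hc 0) 1
    have e10 := congrFun (congrFun hc 1) 0
    simp [Matrix.mul_apply, Fin.sum_univ_two] at e00 e01 e10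
    have m3 : a 0 1 * b 1 0 = a 1 0 * b 0 1 := by linear_combination e00
    have k1 : (2 : F) * (a 0 0 * b 0 1 - a 0 1 * b 0 0) = 0 := by
      linear_combination e01 - a 0 1 * hb + b 0 1 * ha
    have m1 : a 0 0 * b 0 1 = a 0 1 * b 0 0 :=
      sub_eq_zero.mp ((mul_eq_zero.mp k1).resolve_left h2)
    have k2 : (2 : F) * (a 1 0 * b 0 0 - a 0 0 * b 1 0) = 0 := by
      linear_combination e10 - b 1 0 * ha + a 1 0 * hb
    have m2 : a 1 0 * b 0 0 = a 0 0 * b 1 0 :=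
      sub_eq_zero.mp ((mul_eq_zero.mp k2).resolve_left h2)
    rw [LinearIndependent.pair_iff]
    push_neg
    by_cases h00 : a 0 0 = 0
    · by_cases h01 : a 0 1 = 0
      · by_cases h10 : a 1 0 = 0
        · refine ⟨1, 0, ?_, fun h => absurd h one_ne_zero⟩
          ext i j
          fin_cases i <;> fin_cases j <;>
            simp [Matrix.add_apply, Matrix.smul_apply, h00, h01, h10] <;>
            linear_combination ha - h00
        · refine ⟨b 1 0, -(a 1 0), ?_, fun _ => neg_ne_zero.mpr h10⟩
          ext i j
          fin_cases i <;> fin_cases j <;>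
            simp [Matrix.add_apply, Matrix.smul_apply, smul_eq_mul]
          · linear_combination -m2
          · linear_combination m3
          · ring
          · linear_combination b 1 0 * ha - a 1 0 * hb + m2
      · refine ⟨b 0 1, -(a 0 1), ?_, fun _ => neg_ne_zero.mpr h01⟩
        ext i j
        fin_cases i <;> fin_cases j <;>
          simp [Matrix.add_apply, Matrix.smul_apply, smul_eq_mul]
        · linear_combination m1
        · ring
        · linear_combination -m3
        · linear_combination b 0 1 * ha - a 0 1 * hb - m1
    · refine ⟨b 0 0, -(a 0 0), ?_, fun _ => neg_ne_zero.mpr h00⟩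
      ext i j
      fin_cases i <;> fin_cases j <;>
        simp [Matrix.add_apply, Matrix.smul_apply, smul_eq_mul]
      · ring
      · linear_combination -m1
      · linear_combination m2
      · linear_combination b 0 0 * ha - a 0 0 * hb
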